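/- arXiv:2305.04705 — 3 statements merged into one kernel-verified Lean document; each statement's English description precedes it below -/
import Mathlib

section
/- Let ψ, ψ̃ be unit vectors in a complex inner product space and γ, γ̃ > 0 with ε ≤ γ/4, such that ‖(√γ̃/2)·ψ̃ - (√γ/2)·ψ‖ ≤ ε and |√γ - √γ̃| ≤ ε/(√2·√γ). Then ‖ψ̃ - ψ‖ ≤ 3ε/γ. -/
theorem normalized_state_error_bound
    {E : Type*} [NormedAddCommGroup E] [InnerProductSpace ℂ E]
    (ψ ψt : E) (hψ : ‖ψ‖ = 1) (hψt : ‖ψt‖ = 1)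
    (γ γt ε : ℝ) (hγ : 0 < γ) (hγt : 0 < γt) (hγ1 : γ ≤ 1)
    (hε : 0 < ε) (hεγ : ε ≤ γ / 4)
    (h1 : ‖(Real.sqrt γt / 2 : ℂ) • ψt - (Real.sqrt γ / 2 : ℂ) • ψ‖ ≤ ε)
    (h2 : |Real.sqrt γ - Real.sqrt γt| ≤ ε / (Real.sqrt 2 * Real.sqrt γ)) :
    ‖ψt - ψ‖ ≤ 3 * ε / γ := by
  set s := Real.sqrt γ with hs
  set t := Real.sqrt γt with ht
  have hspos : 0 < s := Real.sqrt_pos.mpr hγ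
  have hs1 : s ≤ 1 := by
    rw [hs, show (1:ℝ) = Real.sqrt 1 by simp]
    exact Real.sqrt_le_sqrt hγ1
  have hss : s * s = γ := Real.mul_self_sqrt hγ.le
  -- key decomposition
  have key : (s : ℂ) • (ψt - ψ) = ((s - t : ℝ) : ℂ) • ψt
      + (2 : ℂ) • ((t / 2 : ℂ) • ψt - (s / 2 : ℂ) • ψ) := by
    push_cast
    rw [smul_sub, sub_smul, smul_sub]
    rw [smul_smul, smul_smul]
    ring_nf
    module
  have hn1 : ‖((s - t : ℝ) : ℂ) • ψt‖ = |s - t| := by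
    rw [norm_smul, hψt, mul_one, Complex.norm_real, Real.norm_eq_abs]
  have hn2 : ‖(2 : ℂ) • ((t / 2 : ℂ) • ψt - (s / 2 : ℂ) • ψ)‖ ≤ 2 * ε := by
    rw [norm_smul]
    simp only [Complex.norm_ofNat]
    nlinarith [h1]
  have hns : ‖(s : ℂ) • (ψt - ψ)‖ = s * ‖ψt - ψ‖ := by
    rw [norm_smul, Complex.norm_real, Real.norm_eq_abs, abs_of_pos hspos]
  have hbound : s * ‖ψt - ψ‖ ≤ |s - t| + 2 * ε := by
    rw [← hns, key]
    exact le_trans (norm_add_le _ _) (by rw [hn1]; linarith [hn2])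
  have h2' : |s - t| ≤ ε / (Real.sqrt 2 * s) := h2
  have hsqrt2 : (1:ℝ) ≤ Real.sqrt 2 := by
    rw [show (1:ℝ) = Real.sqrt 1 by simp]
    exact Real.sqrt_le_sqrt (by norm_num)
  have hst : |s - t| ≤ ε / s := by
    refine le_trans h2' ?_
    apply div_le_div_of_nonneg_left hε.le hspos
    nlinarith
  have hfinal : s * ‖ψt - ψ‖ ≤ ε / s + 2 * ε := by linarith
  -- divide by s
  have hγs : γ ≤ s := by nlinarith
  have hgoal : ‖ψt - ψ‖ ≤ ε / γ + 2 * ε / s := by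
    have h' : ‖ψt - ψ‖ ≤ (ε / s + 2 * ε) / s := by
      rw [le_div_iff₀ hspos]; linarith [hfinal]
    have heq : (ε / s + 2 * ε) / s = ε / γ + 2 * ε / s := by
      rw [add_div, div_div, hss]
    linarith [heq ▸ h']
  have h2s : 2 * ε / s ≤ 2 * ε / γ := by
    rw [div_le_div_iff₀ hspos hγ]
    nlinarith
  calc ‖ψt - ψ‖ ≤ ε / γ + 2 * ε / s := hgoal
    _ ≤ ε / γ + 2 * ε / γ := by linarith
    _ = 3 * ε / γ := by ring
end

section
/- For x ∈ [-1,1] and d = 1, the product e^{iφZ}·R(x) has top-left entry e^{iφ}·x; more generally, for any phase sequence Φ = (φ₁,...,φ_d), the top-left entry of ∏_{j=1}^d (e^{iφ_j Z} R(x)) is a polynomial in x of degree at most d with parity d mod 2. -/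
open Complex in
noncomputable def qspR (x : ℝ) : Matrix (Fin 2) (Fin 2) ℂ :=
  !![(x : ℂ), (Real.sqrt (1 - x ^ 2) : ℂ); (Real.sqrt (1 - x ^ 2) : ℂ), -(x : ℂ)]

open Complex in
noncomputable def zRot (φ : ℝ) : Matrix (Fin 2) (Fin 2) ℂ :=
  !![exp (I * φ), 0; 0, exp (-(I * φ))]

open Complex Polynomial in
private lemma qsp_coeff_X_mul' (P : ℂ[X]) (k : ℕ) :
    (X * P).coeff k = if k = 0 then 0 else P.coeff (k - 1) := by
  cases k with
  | zero => simp [Polynomial.mul_coeff_zero]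
  | succ n => simp [Polynomial.coeff_X_mul]

open Complex Polynomial in
private lemma qsp_coeff_X2_mul (P : ℂ[X]) (k : ℕ) :
    (X ^ 2 * P).coeff k = if k < 2 then 0 else P.coeff (k - 2) := by
  have h : (X ^ 2 * P : ℂ[X]) = X * (X * P) := by ring
  rw [h]
  rcases k with _ | _ | k
  · simp [qsp_coeff_X_mul']
  · simp [qsp_coeff_X_mul']
  · rw [qsp_coeff_X_mul', if_neg (by omega), qsp_coeff_X_mul', if_neg (by omega),
      if_neg (by omega)]
    congr 1

open Complex Polynomial in
private lemma zRot_mul_qspR (φ x : ℝ) :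
    zRot φ * qspR x =
      !![exp (I * φ) * x, exp (I * φ) * (Real.sqrt (1 - x ^ 2) : ℂ);
         exp (-(I * φ)) * (Real.sqrt (1 - x ^ 2) : ℂ), -(exp (-(I * φ)) * x)] := by
  ext i j
  fin_cases i <;> fin_cases j <;>
    simp [zRot, qspR, Matrix.mul_apply, Fin.sum_univ_two]

open Complex Polynomial in
private lemma qsp_aux (d : ℕ) (Φ : Fin d → ℝ) :
    ∃ P00 P01 P10 P11 : Polynomial ℂ,
      (∀ k, k > d ∨ k % 2 ≠ d % 2 → P00.coeff k = 0) ∧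
      (∀ k, k + 1 > d ∨ (k + 1) % 2 ≠ d % 2 → P01.coeff k = 0) ∧
      (∀ k, k + 1 > d ∨ (k + 1) % 2 ≠ d % 2 → P10.coeff k = 0) ∧
      (∀ k, k > d ∨ k % 2 ≠ d % 2 → P11.coeff k = 0) ∧
      ∀ x : ℝ, x ∈ Set.Icc (-1 : ℝ) 1 →
        ((List.ofFn fun j : Fin d => zRot (Φ j) * qspR x).prod) 0 0 = P00.eval (x : ℂ) ∧
        ((List.ofFn fun j : Fin d => zRot (Φ j) * qspR x).prod) 0 1
          = (Real.sqrt (1 - x ^ 2) : ℂ) * P01.eval (x : ℂ) ∧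
        ((List.ofFn fun j : Fin d => zRot (Φ j) * qspR x).prod) 1 0
          = (Real.sqrt (1 - x ^ 2) : ℂ) * P10.eval (x : ℂ) ∧
        ((List.ofFn fun j : Fin d => zRot (Φ j) * qspR x).prod) 1 1 = P11.eval (x : ℂ) := by
  induction d with
  | zero =>
      refine ⟨1, 0, 0, 1, ?_, ?_, ?_, ?_, ?_⟩
      · intro k hk
        rw [Polynomial.coeff_one, if_neg (by omega)]
      · intro k _; simp
      · intro k _; simp
      · intro k hk
        rw [Polynomial.coeff_one, if_neg (by omega)]
      · intro x _
        simp [Matrix.one_apply]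
  | succ d ih =>
      obtain ⟨P00, P01, P10, P11, h00, h01, h10, h11, heval⟩ := ih (fun j => Φ j.succ)
      set a : ℂ := exp (I * Φ 0) with ha
      set b : ℂ := exp (-(I * Φ 0)) with hb
      refine ⟨C a * (X * P00 + (1 - X ^ 2) * P10),
              C a * (X * P01 + P11),
              C b * (P00 - X * P10),
              C b * ((1 - X ^ 2) * P01 - X * P11), ?_, ?_, ?_, ?_, ?_⟩
      · intro k hk
        rw [show ((1 : ℂ[X]) - X ^ 2) * P10 = P10 - X ^ 2 * P10 by ring]
        simp only [Polynomial.coeff_C_mul, Polynomial.coeff_add, Polynomial.coeff_sub,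
          qsp_coeff_X_mul', qsp_coeff_X2_mul]
        have A : (if k = 0 then (0 : ℂ) else P00.coeff (k - 1)) = 0 := by
          split
          · rfl
          · exact h00 _ (by omega)
        have B : (if k < 2 then (0 : ℂ) else P10.coeff (k - 2)) = 0 := by
          split
          · rfl
          · exact h10 _ (by omega)
        have Ck : P10.coeff k = 0 := h10 _ (by omega)
        rw [A, B, Ck]; ring
      · intro k hk
        simp only [Polynomial.coeff_C_mul, Polynomial.coeff_add, qsp_coeff_X_mul']
        have A : (if k = 0 then (0 : ℂ) else P01.coeff (k - 1)) = 0 := by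
          split
          · rfl
          · exact h01 _ (by omega)
        have Bk : P11.coeff k = 0 := h11 _ (by omega)
        rw [A, Bk]; ring
      · intro k hk
        simp only [Polynomial.coeff_C_mul, Polynomial.coeff_sub, qsp_coeff_X_mul']
        have A : (if k = 0 then (0 : ℂ) else P10.coeff (k - 1)) = 0 := by
          split
          · rfl
          · exact h10 _ (by omega)
        have Bk : P00.coeff k = 0 := h00 _ (by omega)
        rw [A, Bk]; ring
      · intro k hk
        rw [show ((1 : ℂ[X]) - X ^ 2) * P01 = P01 - X ^ 2 * P01 by ring]
        simp only [Polynomial.coeff_C_mul, Polynomial.coeff_sub, qsp_coeff_X_mul',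
          qsp_coeff_X2_mul]
        have A : (if k = 0 then (0 : ℂ) else P11.coeff (k - 1)) = 0 := by
          split
          · rfl
          · exact h11 _ (by omega)
        have B : (if k < 2 then (0 : ℂ) else P01.coeff (k - 2)) = 0 := by
          split
          · rfl
          · exact h01 _ (by omega)
        have Ck : P01.coeff k = 0 := h01 _ (by omega)
        rw [A, B, Ck]; ring
      · intro x hx
        obtain ⟨e00, e01, e10, e11⟩ := heval x hx
        have h1 : (0 : ℝ) ≤ 1 - x ^ 2 := by nlinarith [hx.1, hx.2]
        have hs : ((Real.sqrt (1 - x ^ 2) : ℝ) : ℂ) * ((Real.sqrt (1 - x ^ 2) : ℝ) : ℂ)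
            = 1 - (x : ℂ) ^ 2 := by
          rw [← Complex.ofReal_mul, Real.mul_self_sqrt h1]
          push_cast
          ring
        rw [List.ofFn_succ, List.prod_cons]
        set M := (List.ofFn fun j : Fin d => zRot (Φ j.succ) * qspR x).prod with hM
        have hBM : ∀ i j : Fin 2, ((zRot (Φ 0) * qspR x) * M) i j
            = (zRot (Φ 0) * qspR x) i 0 * M 0 j + (zRot (Φ 0) * qspR x) i 1 * M 1 j := by
          intro i j
          rw [Matrix.mul_apply, Fin.sum_univ_two]
        have hB00 : (zRot (Φ 0) * qspR x) 0 0 = a * (x : ℂ) := by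
          simp [zRot, qspR, Matrix.mul_apply, Fin.sum_univ_two, ha]
        have hB01 : (zRot (Φ 0) * qspR x) 0 1 = a * ((Real.sqrt (1 - x ^ 2) : ℝ) : ℂ) := by
          simp [zRot, qspR, Matrix.mul_apply, Fin.sum_univ_two, ha]
        have hB10 : (zRot (Φ 0) * qspR x) 1 0 = b * ((Real.sqrt (1 - x ^ 2) : ℝ) : ℂ) := by
          simp [zRot, qspR, Matrix.mul_apply, Fin.sum_univ_two, hb]
        have hB11 : (zRot (Φ 0) * qspR x) 1 1 = -(b * (x : ℂ)) := by
          simp [zRot, qspR, Matrix.mul_apply, Fin.sum_univ_two, hb]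
        refine ⟨?_, ?_, ?_, ?_⟩
        · rw [hBM, hB00, hB01, e00, e10]
          simp only [Polynomial.eval_mul, Polynomial.eval_add, Polynomial.eval_sub,
            Polynomial.eval_one, Polynomial.eval_pow, Polynomial.eval_C, Polynomial.eval_X]
          linear_combination (a * P10.eval (x : ℂ)) * hs
        · rw [hBM, hB00, hB01, e01, e11]
          simp only [Polynomial.eval_mul, Polynomial.eval_add, Polynomial.eval_sub,
            Polynomial.eval_one, Polynomial.eval_pow, Polynomial.eval_C, Polynomial.eval_X]
          ring
        · rw [hBM, hB10, hB11, e00, e10]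
          simp only [Polynomial.eval_mul, Polynomial.eval_add, Polynomial.eval_sub,
            Polynomial.eval_one, Polynomial.eval_pow, Polynomial.eval_C, Polynomial.eval_X]
          ring
        · rw [hBM, hB10, hB11, e01, e11]
          simp only [Polynomial.eval_mul, Polynomial.eval_add, Polynomial.eval_sub,
            Polynomial.eval_one, Polynomial.eval_pow, Polynomial.eval_C, Polynomial.eval_X]
          linear_combination (b * P01.eval (x : ℂ)) * hs

open Complex in
theorem qsp_top_left_entry :
    (∀ (φ : ℝ) (x : ℝ), x ∈ Set.Icc (-1 : ℝ) 1 →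
        (zRot φ * qspR x) 0 0 = exp (I * φ) * x) ∧
    (∀ (d : ℕ) (Φ : Fin d → ℝ), ∃ P : Polynomial ℂ,
        P.natDegree ≤ d ∧
        (∀ k : ℕ, k % 2 ≠ d % 2 → P.coeff k = 0) ∧
        ∀ x : ℝ, x ∈ Set.Icc (-1 : ℝ) 1 →
          ((List.ofFn fun j : Fin d => zRot (Φ j) * qspR x).prod) 0 0 = P.eval (x : ℂ)) := by
  constructor
  · intro φ x _
    rw [zRot_mul_qspR]
    simp
  · intro d Φ
    obtain ⟨P00, _, _, _, h00, _, _, _, heval⟩ := qsp_aux d Φ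
    refine ⟨P00, ?_, ?_, ?_⟩
    · rw [Polynomial.natDegree_le_iff_coeff_eq_zero]
      intro N hN
      exact h00 N (Or.inl hN)
    · intro k hk
      exact h00 k (Or.inr hk)
    · intro x hx
      exact (heval x hx).1
end

section
/- Full error propagation: let c, c̃ : Fin N → [0,1] with max_x |c̃(x) - c(x)| ≤ 2ε, set γ = (1/N)Σ c(x)², γ̃ = (1/N)Σ c̃(x)², and suppose 0 < ε ≤ γ/4 and γ ≤ 1. Then the normalized states ψ = (1/√(Nγ))Σ c(x)e_x and ψ̃ = (1/√(Nγ̃))Σ c̃(x)e_x in ℂ^N satisfy ‖ψ̃ - ψ‖ ≤ 3ε/γ. -/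
/-! Both states are normalizations `u / ‖u‖` of the amplitude vectors, and normalization is
`2 / ‖v‖`-Lipschitz at `v ≠ 0`. The amplitude vectors differ by at most `√N ε` in norm, while
`‖c‖ = √(N γ)`, so `‖ψ̃ - ψ‖ ≤ 2 ε / √γ ≤ 2 ε / γ` because `γ ≤ 1`. -/

open Real

theorem abs_inv_sub_inv_mul_le {a b : ℝ} (ha : 0 ≤ a) (hb : 0 < b) :
    |a⁻¹ - b⁻¹| * a ≤ |b - a| / b := by
  rcases ha.eq_or_lt with rfl | ha
  · simp only [mul_zero, sub_zero]
    positivity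
  · rw [inv_sub_inv ha.ne' hb.ne', abs_div, abs_of_pos (mul_pos ha hb)]
    exact le_of_eq (by field_simp)

theorem norm_inv_norm_smul_sub_inv_norm_smul_le {E : Type*} [NormedAddCommGroup E]
    [NormedSpace ℝ E] (u : E) {v : E} (hv : v ≠ 0) :
    ‖‖u‖⁻¹ • u - ‖v‖⁻¹ • v‖ ≤ 2 * ‖u - v‖ / ‖v‖ := by
  have hv' : 0 < ‖v‖ := norm_pos_iff.mpr hv
  calc ‖‖u‖⁻¹ • u - ‖v‖⁻¹ • v‖ = ‖(‖u‖⁻¹ - ‖v‖⁻¹) • u + ‖v‖⁻¹ • (u - v)‖ := by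
        rw [sub_smul, smul_sub, sub_add_sub_cancel]
    _ ≤ |‖u‖⁻¹ - ‖v‖⁻¹| * ‖u‖ + ‖v‖⁻¹ * ‖u - v‖ := by
        refine (norm_add_le _ _).trans_eq ?_
        rw [norm_smul, norm_smul, Real.norm_eq_abs, norm_inv, norm_norm]
    _ ≤ ‖u - v‖ / ‖v‖ + ‖u - v‖ / ‖v‖ := by
        gcongr
        · exact (abs_inv_sub_inv_mul_le (norm_nonneg u) hv').trans
            (by gcongr; exact abs_norm_sub_norm_le v u |>.trans_eq (norm_sub_rev v u))
        · exact (inv_mul_eq_div _ _).le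
    _ = 2 * ‖u - v‖ / ‖v‖ := by ring

namespace EuclideanSpace

variable {ι 𝕜 : Type*} [Fintype ι] [RCLike 𝕜]

theorem norm_toLp_ofReal (f : ι → ℝ) :
    ‖(WithLp.toLp 2 fun i => (f i : 𝕜) : EuclideanSpace 𝕜 ι)‖ = √(∑ i, f i ^ 2) := by
  simp [EuclideanSpace.norm_eq, sq_abs]

theorem norm_toLp_ofReal_le {f : ι → ℝ} {ε : ℝ} (hε : 0 ≤ ε) (hf : ∀ i, |f i| ≤ ε) :
    ‖(WithLp.toLp 2 fun i => (f i : 𝕜) : EuclideanSpace 𝕜 ι)‖ ≤ √(Fintype.card ι) * ε := by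
  rw [norm_toLp_ofReal, ← sqrt_sq hε, ← sqrt_mul (Nat.cast_nonneg _)]
  gcongr
  calc ∑ i, f i ^ 2 ≤ ∑ _i : ι, ε ^ 2 :=
        Finset.sum_le_sum fun i _ => sq_le_sq' (abs_le.mp (hf i)).1 (abs_le.mp (hf i)).2
    _ = Fintype.card ι * ε ^ 2 := by simp

end EuclideanSpace

theorem full_error_propagation_general (N : ℕ) (hN : 0 < N)
    (c ct : Fin N → ℝ) (ε : ℝ)
    (hclose : ∀ x, |ct x - c x| ≤ ε)
    (γ γt : ℝ)
    (hγdef : γ = (1 / (N : ℝ)) * ∑ x, (c x) ^ 2)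
    (hγtdef : γt = (1 / (N : ℝ)) * ∑ x, (ct x) ^ 2)
    (hε : 0 < ε) (hγ1 : γ ≤ 1) (hγ : 0 < γ) :
    let ψ : EuclideanSpace ℂ (Fin N) := WithLp.toLp 2 (fun x => (1 / Real.sqrt (N * γ) : ℂ) * (c x : ℂ))
    let ψt : EuclideanSpace ℂ (Fin N) := WithLp.toLp 2 (fun x => (1 / Real.sqrt (N * γt) : ℂ) * (ct x : ℂ))
    ‖ψt - ψ‖ ≤ 3 * ε / γ := by
  intro ψ ψt
  set v : EuclideanSpace ℂ (Fin N) := WithLp.toLp 2 fun x => (c x : ℂ)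
  set w : EuclideanSpace ℂ (Fin N) := WithLp.toLp 2 fun x => (ct x : ℂ)
  have hNpos : (0 : ℝ) < N := Nat.cast_pos.mpr hN
  have hv : ‖v‖ = √N * √γ := by
    refine (EuclideanSpace.norm_toLp_ofReal c).trans ?_
    rw [← sqrt_mul hNpos.le, hγdef]
    field_simp
  have hw : ‖w‖ = √(N * γt) := by
    refine (EuclideanSpace.norm_toLp_ofReal ct).trans ?_
    rw [hγtdef]
    field_simp
  have hψ : ψ = ‖v‖⁻¹ • v := by
    ext x; simp [ψ, v, hv, sqrt_mul hNpos.le]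
  have hψt : ψt = ‖w‖⁻¹ • w := by
    ext x; simp [ψt, w, hw]
  have hwv : ‖w - v‖ ≤ √N * ε := by
    have : w - v = WithLp.toLp 2 fun x => ((ct x - c x : ℝ) : ℂ) := by ext x; simp [v, w]
    simpa [this] using EuclideanSpace.norm_toLp_ofReal_le (𝕜 := ℂ) hε.le hclose
  have hv0 : v ≠ 0 := norm_pos_iff.mp (by rw [hv]; positivity)
  calc ‖ψt - ψ‖ ≤ 2 * ‖w - v‖ / ‖v‖ := by
        rw [hψ, hψt]; exact norm_inv_norm_smul_sub_inv_norm_smul_le w hv0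
    _ ≤ 2 * (√N * ε) / (√N * √γ) := by rw [hv]; gcongr
    _ = 2 * ε / √γ := by field_simp
    _ ≤ 2 * ε / γ := by gcongr; exact le_sqrt_self_iff.mpr hγ1
    _ ≤ 3 * ε / γ := by gcongr; norm_num

theorem full_error_propagation (N : ℕ) (hN : 0 < N)
    (c ct : Fin N → ℝ) (ε : ℝ)
    (hc : ∀ x, c x ∈ Set.Icc (0 : ℝ) 1) (hct : ∀ x, ct x ∈ Set.Icc (0 : ℝ) 1)
    (hclose : ∀ x, |ct x - c x| ≤ ε)
    (γ γt : ℝ)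
    (hγdef : γ = (1 / (N : ℝ)) * ∑ x, (c x) ^ 2)
    (hγtdef : γt = (1 / (N : ℝ)) * ∑ x, (ct x) ^ 2)
    (hε : 0 < ε) (hεγ : ε ≤ γ / 4) (hγ1 : γ ≤ 1) (hγ : 0 < γ) :
    let ψ : EuclideanSpace ℂ (Fin N) := WithLp.toLp 2 (fun x => (1 / Real.sqrt (N * γ) : ℂ) * (c x : ℂ))
    let ψt : EuclideanSpace ℂ (Fin N) := WithLp.toLp 2 (fun x => (1 / Real.sqrt (N * γt) : ℂ) * (ct x : ℂ))
    ‖ψt - ψ‖ ≤ 3 * ε / γ :=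
  full_error_propagation_general N hN c ct ε hclose γ γt hγdef hγtdef hε hγ1 hγ
end
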